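/- arXiv:0811.4514 — 2 statements merged into one kernel-verified Lean document; each statement's English description precedes it below -/
import Mathlib

section
/- Let $v, w : [a,b] \to \mathbb{R}$ be bounded measurable functions with $v = v^{\sharp}$ its own increasing rearrangement (i.e., $v$ is increasing) and suppose $v$ is strictly increasing. If $w^{\ast}$ denotes the decreasing rearrangement of $w$, then $\int_a^b v\, w^{\ast}\,dx \le \int_a^b v\, w\,dx$, with equality if and only if $w = w^{\ast}$ (almost everywhere). -/
open MeasureTheory Set

/-- Two functions are equimeasurable on `[a,b]`: their super-level sets have equal measure. -/
def EquimeasurableOn (a b : ℝ) (f g : ℝ → ℝ) : Prop :=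
  ∀ c : ℝ, volume {x ∈ Icc a b | c < f x} = volume {x ∈ Icc a b | c < g x}

/-!
Layer cake. If `|w|, |w*| ≤ R`, then `w - w* = ∫_{-R}^{R} (1[t < w] - 1[t < w*]) dt`, so by
Fubini `∫ v (w - w*) = ∫_{-R}^{R} (∫_{w > t} v - ∫_{w* > t} v) dt`. For each `t` the two
super-level sets have the same measure, and since `w*` is decreasing, `{w* > t}` is an initial
segment of `[a,b]`. A strictly increasing `v` has strictly less mass on an initial segment than on
any other set of the same measure, unless the two sets agree a.e. Hence every slice is
nonnegative, and equality forces `{w > t} = {w* > t}` a.e. for a.e. `t`; the same identity with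
`w - w*` in place of `v` then gives `∫ (w - w*)² = 0`. The bound `R` comes from the monotonicity of
`w*` and transfers to `w` by equimeasurability.
-/

open scoped ENNReal

theorem setIntegral_Icc_indicator_Iio_one {R c : ℝ} (hc : c ∈ Icc (-R) R) :
    ∫ t in Icc (-R) R, (Iio c).indicator 1 t = c + R := by
  rw [integral_indicator_one measurableSet_Iio, measureReal_restrict_apply measurableSet_Iio]
  have : Iio c ∩ Icc (-R) R = Ico (-R) c := by
    ext t; simp only [mem_inter_iff, mem_Iio, mem_Icc, mem_Ico]
    constructor
    · rintro ⟨h1, h2, -⟩; exact ⟨h2, h1⟩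
    · rintro ⟨h1, h2⟩; exact ⟨h2, h1, h2.le.trans hc.2⟩
  rw [this, Real.volume_real_Ico_of_le hc.1]
  ring

section MeasureSpace

variable {α : Type*} [MeasurableSpace α] {μ : Measure α}

theorem setIntegral_lt_setIntegral_of_ae_le_of_ae_lt {f : α → ℝ} {C : ℝ} {s t : Set α}
    (hst : μ s = μ t) (ht_top : μ t ≠ ∞) (ht_zero : μ t ≠ 0)
    (hfs : ∀ᵐ x ∂μ.restrict s, f x ≤ C) (hft : ∀ᵐ x ∂μ.restrict t, C < f x)
    (hfis : IntegrableOn f s μ) (hfit : IntegrableOn f t μ) :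
    ∫ x in s, f x ∂μ < ∫ x in t, f x ∂μ := by
  have hC_t : IntegrableOn (fun _ => C) t μ := integrableOn_const ht_top
  have hle : ∫ x in s, f x ∂μ ≤ C * μ.real t := by
    calc ∫ x in s, f x ∂μ ≤ ∫ x in s, C ∂μ :=
          integral_mono_ae hfis (integrableOn_const (hst ▸ ht_top)) hfs
      _ = C * μ.real t := by rw [setIntegral_const, smul_eq_mul, mul_comm, measureReal_def, hst,
          measureReal_def]
  have hpos : 0 < ∫ x in t, (f x - C) ∂μ := by
    rw [integral_pos_iff_support_of_nonneg_ae (hft.mono fun x hx => (sub_pos.2 hx).le)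
      (hfit.sub hC_t)]
    calc (0 : ℝ≥0∞) < μ.restrict t univ := by rwa [Measure.restrict_apply_univ, pos_iff_ne_zero]
      _ ≤ μ.restrict t (Function.support fun x => f x - C) :=
        measure_mono_ae (hft.mono fun x hx _ => (sub_pos.2 hx).ne')
  rw [integral_sub hfit hC_t, setIntegral_const, smul_eq_mul] at hpos
  linarith

theorem setIntegral_lt_setIntegral_or_ae_eq [IsFiniteMeasure μ] {f : α → ℝ} {C : ℝ}
    {A B : Set α} (hA : MeasurableSet A) (hB : MeasurableSet B) (hAB : μ A = μ B)
    (hf : Integrable f μ)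
    (hf_le : ∀ᵐ x ∂μ.restrict (B \ A), f x ≤ C) (hf_lt : ∀ᵐ x ∂μ.restrict (A \ B), C < f x) :
    ∫ x in B, f x ∂μ < ∫ x in A, f x ∂μ ∨ A =ᵐ[μ] B := by
  have hsymm : μ (B \ A) = μ (A \ B) :=
    measure_sdiff_symm hB.nullMeasurableSet hA.nullMeasurableSet hAB.symm (measure_ne_top _ _)
  by_cases h0 : μ (A \ B) = 0
  · exact Or.inr (ae_eq_set.2 ⟨h0, hsymm.trans h0⟩)
  · have hlt := setIntegral_lt_setIntegral_of_ae_le_of_ae_lt hsymm (measure_ne_top _ _) h0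
      hf_le hf_lt hf.integrableOn hf.integrableOn
    have hA_split := integral_inter_add_sdiff hB (hf.integrableOn (s := A))
    have hB_split := integral_inter_add_sdiff hA (hf.integrableOn (s := B))
    rw [inter_comm] at hB_split
    exact Or.inl (by linarith)

theorem integrable_setIntegral_sub_and_integral_mul_sub_eq [IsFiniteMeasure μ]
    {h f g : α → ℝ} {R : ℝ} (hh : Integrable h μ) (hf : Measurable f) (hg : Measurable g)
    (hfR : ∀ᵐ x ∂μ, f x ∈ Icc (-R) R) (hgR : ∀ᵐ x ∂μ, g x ∈ Icc (-R) R) :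
    Integrable (fun t => (∫ x in {x | t < f x}, h x ∂μ) - ∫ x in {x | t < g x}, h x ∂μ)
        (volume.restrict (Icc (-R) R)) ∧
      ∫ x, h x * (f x - g x) ∂μ =
        ∫ t in Icc (-R) R, ((∫ x in {x | t < f x}, h x ∂μ) - ∫ x in {x | t < g x}, h x ∂μ) := by
  set ν := volume.restrict (Icc (-R) R)
  set F : α → ℝ → ℝ := fun x t => h x * ((Iio (f x)).indicator 1 t - (Iio (g x)).indicator 1 t)
  have hmeas : ∀ k : α → ℝ, Measurable k →
      Measurable fun p : α × ℝ => (Iio (k p.1)).indicator (1 : ℝ → ℝ) p.2 := fun k hk =>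
    (measurable_const (a := (1 : ℝ))).indicator
      (measurableSet_lt measurable_snd (hk.comp measurable_fst))
  have hF : Integrable (Function.uncurry F) (μ.prod ν) := by
    refine (hh.comp_fst ν).mul_bdd (c := 1) ((hmeas f hf).sub (hmeas g hg)).aestronglyMeasurable
      (ae_of_all _ fun p => ?_)
    simp only [indicator_apply, mem_Iio, Pi.one_apply]
    split_ifs <;> norm_num
  have h_inner_t : ∀ᵐ x ∂μ, ∫ t, F x t ∂ν = h x * (f x - g x) := by
    filter_upwards [hfR, hgR] with x hfx hgx
    rw [integral_const_mul, integral_sub ((integrable_const 1).indicator measurableSet_Iio)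
      ((integrable_const 1).indicator measurableSet_Iio),
      setIntegral_Icc_indicator_Iio_one hfx, setIntegral_Icc_indicator_Iio_one hgx]
    ring
  have h_inner_x : ∀ t, ∫ x, F x t ∂μ =
      (∫ x in {x | t < f x}, h x ∂μ) - ∫ x in {x | t < g x}, h x ∂μ := by
    intro t
    have hf_t : MeasurableSet {x | t < f x} := measurableSet_lt measurable_const hf
    have hg_t : MeasurableSet {x | t < g x} := measurableSet_lt measurable_const hg
    have hsplit : (fun x => F x t) =
        fun x => {x | t < f x}.indicator h x - {x | t < g x}.indicator h x := by
      ext x; simp [F, indicator_apply, mul_sub]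
    rw [hsplit, integral_sub (hh.indicator hf_t) (hh.indicator hg_t), integral_indicator hf_t,
      integral_indicator hg_t]
  refine ⟨hF.integral_prod_right.congr (ae_of_all _ h_inner_x), ?_⟩
  calc ∫ x, h x * (f x - g x) ∂μ = ∫ x, ∫ t, F x t ∂ν ∂μ :=
        integral_congr_ae (h_inner_t.mono fun x hx => hx.symm)
    _ = ∫ t, ∫ x, F x t ∂μ ∂ν := integral_integral_swap hF
    _ = _ := by simp_rw [h_inner_x]

theorem ae_eq_of_forall_ae_superlevel_ae_eq [IsFiniteMeasure μ] {f g : α → ℝ} {R : ℝ}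
    (hf : Measurable f) (hg : Measurable g)
    (hfR : ∀ᵐ x ∂μ, f x ∈ Icc (-R) R) (hgR : ∀ᵐ x ∂μ, g x ∈ Icc (-R) R)
    (hlevel : ∀ᵐ t ∂volume.restrict (Icc (-R) R), {x | t < f x} =ᵐ[μ] {x | t < g x}) :
    f =ᵐ[μ] g := by
  have hbound : ∀ᵐ x ∂μ, ‖f x - g x‖ ≤ R + R := by
    filter_upwards [hfR, hgR] with x hfx hgx
    exact (norm_sub_le _ _).trans (add_le_add (abs_le.2 hfx) (abs_le.2 hgx))
  have hdiff : Integrable (fun x => f x - g x) μ :=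
    .of_bound (hf.sub hg).aestronglyMeasurable _ hbound
  obtain ⟨-, hlayer⟩ := integrable_setIntegral_sub_and_integral_mul_sub_eq hdiff hf hg hfR hgR
  have hsq : ∫ x, (f x - g x) * (f x - g x) ∂μ = 0 := by
    rw [hlayer, integral_congr_ae (g := fun _ => 0) ?_, integral_zero]
    filter_upwards [hlevel] with t ht
    rw [setIntegral_congr_set ht, sub_self]
  filter_upwards [(integral_eq_zero_iff_of_nonneg (fun x => mul_self_nonneg _)
    (hdiff.mul_bdd (hf.sub hg).aestronglyMeasurable hbound)).1 hsq] with x hx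
  exact sub_eq_zero.1 (mul_self_eq_zero.1 hx)

end MeasureSpace

theorem AntitoneOn.exists_Ico_subset_superlevel_subset_Icc {g : ℝ → ℝ} {a b : ℝ} (hab : a ≤ b)
    (hg : AntitoneOn g (Icc a b)) (t : ℝ) :
    ∃ c ∈ Icc a b, Ico a c ⊆ {x ∈ Icc a b | t < g x} ∧ {x ∈ Icc a b | t < g x} ⊆ Icc a c := by
  set S := insert a {x ∈ Icc a b | t < g x}
  have hS_bdd : BddAbove S := ⟨b, by rintro x (rfl | hx); exacts [hab, hx.1.2]⟩
  have hS_ne : S.Nonempty := insert_nonempty _ _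
  have hc_le : sSup S ≤ b := csSup_le hS_ne (by rintro x (rfl | hx); exacts [hab, hx.1.2])
  refine ⟨sSup S, ⟨le_csSup hS_bdd (mem_insert _ _), hc_le⟩, fun x hx => ?_,
    fun x hx => ⟨hx.1.1, le_csSup hS_bdd (mem_insert_of_mem _ hx)⟩⟩
  have hxI : x ∈ Icc a b := ⟨hx.1, hx.2.le.trans hc_le⟩
  obtain ⟨y, hy, hxy⟩ := exists_lt_of_lt_csSup hS_ne hx.2
  rcases hy with rfl | ⟨hy, hty⟩
  · exact absurd hx.1 (not_le.2 hxy)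
  · exact ⟨hxI, hty.trans_le (hg hxI hy hxy.le)⟩

theorem EquimeasurableOn.ae_mem_Icc {a b R : ℝ} {f g : ℝ → ℝ} (hfg : EquimeasurableOn a b f g)
    (hf : Measurable f) (hg : ∀ x ∈ Icc a b, |g x| < R) :
    ∀ᵐ x ∂volume.restrict (Icc a b), f x ∈ Icc (-R) R := by
  have hlevel : ∀ c, volume.restrict (Icc a b) {x | c < f x} = volume {x ∈ Icc a b | c < g x} :=
    fun c => by
      rw [Measure.restrict_apply (measurableSet_lt measurable_const hf), inter_comm, ← hfg c]; rfl
  have h_above : ∀ᵐ x ∂volume.restrict (Icc a b), f x ≤ R := by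
    simp_rw [ae_iff, not_le, hlevel]
    exact measure_mono_null
      (fun x hx => (not_lt.2 ((le_abs_self _).trans (hg x hx.1).le) hx.2).elim) measure_empty
  have h_below : ∀ᵐ x ∂volume.restrict (Icc a b), -R < f x := by
    rw [ae_iff_measure_eq (measurableSet_lt measurable_const hf).nullMeasurableSet, hlevel,
      Measure.restrict_apply_univ]
    congr 1
    ext x
    exact ⟨fun hx => hx.1, fun hx => ⟨hx, (abs_lt.1 (hg x hx)).1⟩⟩
  filter_upwards [h_above, h_below] with x h1 h2 using ⟨h2.le, h1⟩

theorem StrictMonoOn.setIntegral_superlevel_lt_or_ae_eq {a b : ℝ} (hab : a ≤ b)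
    {v w wstar : ℝ → ℝ} (hv : StrictMonoOn v (Icc a b)) (hw : Measurable w)
    (hws : Measurable wstar) (hws_anti : AntitoneOn wstar (Icc a b))
    (hequi : EquimeasurableOn a b w wstar) (t : ℝ) :
    ∫ x in {x | t < wstar x}, v x ∂volume.restrict (Icc a b) <
        ∫ x in {x | t < w x}, v x ∂volume.restrict (Icc a b) ∨
      {x | t < w x} =ᵐ[volume.restrict (Icc a b)] {x | t < wstar x} := by
  obtain ⟨c, hc, hIco, hIcc⟩ := hws_anti.exists_Ico_subset_superlevel_subset_Icc hab t
  have hA : MeasurableSet {x | t < w x} := measurableSet_lt measurable_const hw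
  have hB : MeasurableSet {x | t < wstar x} := measurableSet_lt measurable_const hws
  refine setIntegral_lt_setIntegral_or_ae_eq (C := v c) hA hB ?_
    (hv.monotoneOn.integrableOn_isCompact isCompact_Icc) ?_ ?_
  · rw [Measure.restrict_apply hA, Measure.restrict_apply hB, inter_comm,
      inter_comm {x | t < wstar x}]
    exact hequi t
  · rw [Measure.restrict_restrict (hB.diff hA)]
    exact ae_restrict_of_forall_mem ((hB.diff hA).inter measurableSet_Icc)
      fun x ⟨⟨hxB, _⟩, hx⟩ => hv.monotoneOn hx hc (hIcc ⟨hx, hxB⟩).2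
  · rw [Measure.restrict_restrict (hA.diff hB)]
    filter_upwards [ae_restrict_mem ((hA.diff hB).inter measurableSet_Icc),
      ae_restrict_of_ae (Measure.ae_ne volume c)] with x ⟨⟨_, hxB⟩, hx⟩ hxc
    have hcx : c ≤ x := not_lt.1 fun hxc => hxB (hIco ⟨hx.1, hxc⟩).2
    exact hv hc hx (hcx.lt_of_ne hxc.symm)

theorem StrictMonoOn.integral_mul_sub_nonneg_and_ae_eq_of_eq_zero {a b R : ℝ} (hab : a ≤ b)
    {v w wstar : ℝ → ℝ} (hv : StrictMonoOn v (Icc a b)) (hw : Measurable w)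
    (hws : Measurable wstar) (hws_anti : AntitoneOn wstar (Icc a b))
    (hequi : EquimeasurableOn a b w wstar)
    (hw_R : ∀ᵐ x ∂volume.restrict (Icc a b), w x ∈ Icc (-R) R)
    (hws_R : ∀ᵐ x ∂volume.restrict (Icc a b), wstar x ∈ Icc (-R) R) :
    0 ≤ ∫ x in Icc a b, v x * (w x - wstar x) ∧
      (∫ x in Icc a b, v x * (w x - wstar x) = 0 → w =ᵐ[volume.restrict (Icc a b)] wstar) := by
  obtain ⟨hDi, hlayer⟩ := integrable_setIntegral_sub_and_integral_mul_sub_eq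
    (hv.monotoneOn.integrableOn_isCompact isCompact_Icc) hw hws hw_R hws_R
  have hslice := hv.setIntegral_superlevel_lt_or_ae_eq hab hw hws hws_anti hequi
  have hD_nonneg : ∀ t, 0 ≤ (∫ x in {x | t < w x}, v x ∂volume.restrict (Icc a b)) -
      ∫ x in {x | t < wstar x}, v x ∂volume.restrict (Icc a b) := fun t =>
    (hslice t).elim (fun h => (sub_pos.2 h).le)
      fun h => (sub_eq_zero.2 (setIntegral_congr_set h)).ge
  rw [hlayer]
  refine ⟨integral_nonneg hD_nonneg, fun h => ?_⟩
  refine ae_eq_of_forall_ae_superlevel_ae_eq hw hws hw_R hws_R ?_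
  filter_upwards [(integral_eq_zero_iff_of_nonneg hD_nonneg hDi).1 h] with t ht
  exact (hslice t).resolve_left (sub_eq_zero.1 ht).not_gt

theorem hlp_decreasing_rearrangement_general (a b : ℝ) (hab : a < b)
    (v w wstar : ℝ → ℝ)
    (hwmeas : Measurable w) (hwsmeas : Measurable wstar)
    (hv : StrictMonoOn v (Icc a b))
    (hws_anti : AntitoneOn wstar (Icc a b))
    (hws_equi : EquimeasurableOn a b w wstar) :
    (∫ x in a..b, v x * wstar x) ≤ ∫ x in a..b, v x * w x ∧
    ((∫ x in a..b, v x * wstar x) = (∫ x in a..b, v x * w x) ↔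
      w =ᵐ[volume.restrict (Icc a b)] wstar) := by
  set R := max |wstar b| |wstar a| + 1
  have hws_lt : ∀ x ∈ Icc a b, |wstar x| < R := fun x hx =>
    (abs_le_max_abs_abs (hws_anti hx (right_mem_Icc.2 hab.le) hx.2)
      (hws_anti (left_mem_Icc.2 hab.le) hx hx.1)).trans_lt (lt_add_one _)
  have hws_R : ∀ᵐ x ∂volume.restrict (Icc a b), wstar x ∈ Icc (-R) R :=
    ae_restrict_of_forall_mem measurableSet_Icc fun x hx => abs_le.1 (hws_lt x hx).le
  have hw_R := hws_equi.ae_mem_Icc hwmeas hws_lt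
  have hv_mul : ∀ u : ℝ → ℝ, Measurable u → (∀ᵐ x ∂volume.restrict (Icc a b), u x ∈ Icc (-R) R) →
      IntegrableOn (fun x => v x * u x) (Icc a b) := fun u hu huR =>
    (hv.monotoneOn.integrableOn_isCompact isCompact_Icc).mul_bdd hu.aestronglyMeasurable
      (huR.mono fun x hx => abs_le.2 hx)
  have hgap : (∫ x in a..b, v x * w x) - ∫ x in a..b, v x * wstar x =
      ∫ x in Icc a b, v x * (w x - wstar x) := by
    simp only [intervalIntegral.integral_of_le hab.le, ← integral_Icc_eq_integral_Ioc, mul_sub]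
    exact (integral_sub (hv_mul w hwmeas hw_R) (hv_mul wstar hwsmeas hws_R)).symm
  obtain ⟨hnonneg, hae_of_eq⟩ := hv.integral_mul_sub_nonneg_and_ae_eq_of_eq_zero hab.le hwmeas
    hwsmeas hws_anti hws_equi hw_R hws_R
  refine ⟨sub_nonneg.1 (hgap ▸ hnonneg), fun h => hae_of_eq (by rw [← hgap, h, sub_self]),
    fun hae => ?_⟩
  rw [eq_comm, ← sub_eq_zero, hgap]
  exact integral_eq_zero_of_ae (hae.mono fun x hx => by simp [hx])

/-- Hardy–Littlewood–Pólya: if `v` is strictly increasing and `w*` is the decreasing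
rearrangement of the bounded measurable function `w` on `[a,b]`, then
`∫ v w* ≤ ∫ v w`, with equality iff `w = w*` a.e. -/
theorem hlp_decreasing_rearrangement (a b : ℝ) (hab : a < b)
    (v w wstar : ℝ → ℝ)
    (hvmeas : Measurable v) (hwmeas : Measurable w) (hwsmeas : Measurable wstar)
    (hvbd : ∃ M, ∀ x ∈ Icc a b, |v x| ≤ M) (hwbd : ∃ M, ∀ x ∈ Icc a b, |w x| ≤ M)
    (hv : StrictMonoOn v (Icc a b))
    (hws_anti : AntitoneOn wstar (Icc a b))
    (hws_equi : EquimeasurableOn a b w wstar) :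
    (∫ x in a..b, v x * wstar x) ≤ ∫ x in a..b, v x * w x ∧
    ((∫ x in a..b, v x * wstar x) = (∫ x in a..b, v x * w x) ↔
      w =ᵐ[volume.restrict (Icc a b)] wstar) :=
  hlp_decreasing_rearrangement_general a b hab v w wstar hwmeas hwsmeas hv hws_anti hws_equi
end

section
/- Let $c > 0$, $\alpha \in \mathbb{R}$, and let $(s_n)_{n \in \mathbb{N}}$, $(t_n)_{n \in \mathbb{N}}$ be real sequences with $s_n = o(n)$ and $t_n = o(n)$ as $n \to \infty$. Then there are only finitely many pairs $(m,n) \in \mathbb{N} \times \mathbb{N}$ with $n \ne m$ such that $c n^2 + s_n = c m^2 + t_m + \alpha$. -/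
open Filter Asymptotics

/-- If `s_n = o(n)` and `t_n = o(n)`, then for `c > 0` there are only finitely many
pairs `(m,n)` with `n ≠ m` such that `c n² + s_n = c m² + t_m + α`. -/
theorem finitely_many_interface_eigenvalue_pairs
    (c α : ℝ) (hc : 0 < c) (s t : ℕ → ℝ)
    (hs : (fun n => s n) =o[atTop] (fun n : ℕ => (n : ℝ)))
    (ht : (fun n => t n) =o[atTop] (fun n : ℕ => (n : ℝ))) :
    { p : ℕ × ℕ | p.2 ≠ p.1 ∧
        c * (p.2 : ℝ) ^ 2 + s p.2 = c * (p.1 : ℝ) ^ 2 + t p.1 + α }.Finite := by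
  have hc2 : (0:ℝ) < c / 2 := by positivity
  have hs' := hs.def hc2
  have ht' := ht.def hc2
  obtain ⟨N, hN⟩ := (hs'.and ht').exists_forall_of_atTop
  set A : ℝ := ∑ n ∈ Finset.range N, (|s n| + |t n|) with hA
  have hAnn : 0 ≤ A := Finset.sum_nonneg fun i _ => by positivity
  have hsb : ∀ n : ℕ, |s n| ≤ c / 2 * n + A := by
    intro n
    rcases lt_or_ge n N with h | h
    · have : |s n| ≤ A := by
        calc |s n| ≤ |s n| + |t n| := le_add_of_nonneg_right (abs_nonneg _)
          _ ≤ A := Finset.single_le_sum (f := fun i => |s i| + |t i|)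
              (fun i _ => by positivity) (Finset.mem_range.2 h)
      nlinarith [Nat.cast_nonneg (α := ℝ) n]
    · have := (hN n h).1
      simp only [Real.norm_eq_abs, Nat.abs_cast] at this
      nlinarith
  have htb : ∀ n : ℕ, |t n| ≤ c / 2 * n + A := by
    intro n
    rcases lt_or_ge n N with h | h
    · have : |t n| ≤ A := by
        calc |t n| ≤ |s n| + |t n| := le_add_of_nonneg_left (abs_nonneg _)
          _ ≤ A := Finset.single_le_sum (f := fun i => |s i| + |t i|)
              (fun i _ => by positivity) (Finset.mem_range.2 h)
      nlinarith [Nat.cast_nonneg (α := ℝ) n]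
    · have := (hN n h).2
      simp only [Real.norm_eq_abs, Nat.abs_cast] at this
      nlinarith
  set K : ℝ := 2 / c * (2 * A + |α|) with hK
  have hfin : { p : ℕ × ℕ | p.2 ≠ p.1 ∧
      c * (p.2 : ℝ) ^ 2 + s p.2 = c * (p.1 : ℝ) ^ 2 + t p.1 + α }
      ⊆ Set.Iic (⌈K⌉₊, ⌈K⌉₊) := by
    rintro ⟨m, n⟩ ⟨hne, heq⟩
    simp only at hne heq
    -- key bound: n + m ≤ K
    have h1 : (1:ℝ) ≤ |(n:ℝ) - m| := by
      rcases hne.lt_or_gt with h | h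
      · have h' : (n:ℝ) + 1 ≤ m := by exact_mod_cast Nat.succ_le_of_lt h
        rw [abs_sub_comm, abs_of_nonneg (by linarith)]; linarith
      · have h' : (m:ℝ) + 1 ≤ n := by exact_mod_cast Nat.succ_le_of_lt h
        rw [abs_of_nonneg (by linarith)]; linarith
    have hnm0 : (0:ℝ) ≤ (n:ℝ) + m := by positivity
    have hmain : c * ((n:ℝ) + m) ≤ |t m| + |s n| + |α| := by
      have : c * ((n:ℝ) + m) ≤ |c * ((n:ℝ)^2 - m^2)| := by
        rw [show c * ((n:ℝ)^2 - m^2) = c * ((n:ℝ) - m) * ((n:ℝ) + m) by ring,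
          abs_mul, abs_mul, abs_of_pos hc, abs_of_nonneg hnm0]
        have := mul_le_mul_of_nonneg_left (mul_le_mul_of_nonneg_right h1 hnm0) hc.le
        nlinarith
      calc c * ((n:ℝ) + m) ≤ |c * ((n:ℝ)^2 - m^2)| := this
        _ = |t m + α - s n| := by rw [show c * ((n:ℝ)^2 - m^2) = t m + α - s n by linarith]
        _ ≤ |t m| + |α| + |s n| := by
            calc |t m + α - s n| ≤ |t m + α| + |s n| := abs_sub _ _
              _ ≤ |t m| + |α| + |s n| := by gcongr; exact abs_add_le _ _
        _ = |t m| + |s n| + |α| := by ring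
    have hsn := hsb n
    have htm := htb m
    have hle : (n:ℝ) + m ≤ K := by
      rw [hK]
      rw [div_mul_eq_mul_div, le_div_iff₀ hc]
      nlinarith
    have hm : (m:ℝ) ≤ K := by linarith [Nat.cast_nonneg (α := ℝ) n]
    have hn : (n:ℝ) ≤ K := by linarith [Nat.cast_nonneg (α := ℝ) m]
    rw [Set.mem_Iic, Prod.mk_le_mk]
    constructor
    · exact_mod_cast hm.trans (Nat.le_ceil K)
    · exact_mod_cast hn.trans (Nat.le_ceil K)
  exact (Set.finite_Iic _).subset hfin
end
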